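/- arXiv:1410.1976 — 2 statements merged into one kernel-verified Lean document; each statement's English description precedes it below -/
import Mathlib

section
/- For the birth-and-death transition matrix Q on ℕ ∪ {0} with parameters (p_x, r_x, q_x), conditions (e2) and (e3) are together equivalent to the explicit inequalities (bb2) and (bb3): namely, with the convention p_0 = 0, for all y ≥ 2, p_{y−1}q_y/(r_{y−1}² + p_{y−1}q_y + q_{y−1}p_{y−2}) ≤ r_y q_y/(q_y r_{y−1} + r_y q_y) ≤ (r_y² + p_y q_{y+1})/(r_y² + p_y q_{y+1} + q_y p_{y−1}) and p_{y−1}q_y/(r_{y−1}² + p_{y−1}q_y + q_{y−1}p_{y−2}) ≤ p_{y−1}r_y/(p_{y−1}r_y + r_{y−1}p_{y−1}) ≤ (r_y² + p_y q_{y+1})/(r_y² + p_y q_{y+1} + q_y p_{y−1}); together with p_1/(p_1 + r_1) ≤ r_2 + p_2 and p_{y−1} ≤ p_y + r_y for all y ≥ 3. -/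
/-!
All the laws involved live on three consecutive sites, so both conditions reduce to finitely
many comparisons. The bridge law `w ↦ Q(x,w)Q(w,z)/Q²(x,z)` is carried by
`{x-1, x, x+1} ∩ {z-1, z, z+1}`, so its tail at `y` is `1` when `y < max x z` and `0` when
`y > min x z + 1`. Two such tails at `y` can therefore only be out of order when
`x, z, x', z' ∈ {y-1, y}`, and there monotonicity in `(x, z)` reduces to the four edges of the
square, which are the four inequalities (bb2). For (e3), stochastic domination is a preorder,
so it suffices to compare the conditioned laws from `x` and `x+1`; these live on windows shifted
by one, and such laws are ordered iff the mass of the first at `x+1` is at most the tail of the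
second at `x+1`, which is (bb3).
-/

open scoped Classical

noncomputable section

/-- `n`-step transition probabilities of a kernel on a countable state space. -/
def kpow {α : Type*} (Q : α → α → ℝ) : ℕ → α → α → ℝ
  | 0 => fun a b => if a = b then 1 else 0
  | n + 1 => fun a b => ∑' c, kpow Q n a c * Q c b

/-- The birth-and-death transition matrix on `ℕ` with `0` absorbing:
`Q(x,x-1) = q x`, `Q(x,x) = r x`, `Q(x,x+1) = p x` for `x ≥ 1`, `Q(0,0) = 1`. -/
def bdQ (p r q : ℕ → ℝ) : ℕ → ℕ → ℝ := fun x y =>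
  if x = 0 then (if y = 0 then 1 else 0)
  else if y = x - 1 then q x else if y = x then r x else if y = x + 1 then p x else 0

/-- `νQ^n(y)`: the (unconditioned) law at time `n` of the chain started from `ν`. -/
def evolveN (Q : ℕ → ℕ → ℝ) (ν : ℕ → ℝ) (n : ℕ) (y : ℕ) : ℝ :=
  ∑' x : ℕ, ν x * kpow Q n x y

/-- `νT_n(y) = νQ^n(y)/(1 - νQ^n(0))` for `y ∈ S = {1,2,...}`, the law at time `n`
conditioned on non-absorption, viewed as a measure on `ℕ` vanishing at `0`. -/
def TN (Q : ℕ → ℕ → ℝ) (ν : ℕ → ℝ) (n : ℕ) (y : ℕ) : ℝ :=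
  if y = 0 then 0 else evolveN Q ν n y / (1 - evolveN Q ν n 0)

/-- A probability measure on `S = {1,2,...}`, viewed as a function on `ℕ`. -/
def IsProbN (ν : ℕ → ℝ) : Prop :=
  ν 0 = 0 ∧ (∀ x, 0 ≤ ν x) ∧ HasSum ν 1

/-- A quasi-stationary distribution: a probability on `S` with `νT_1 = ν`. -/
def IsQSDN (Q : ℕ → ℕ → ℝ) (ν : ℕ → ℝ) : Prop :=
  IsProbN ν ∧ ∀ y, TN Q ν 1 y = ν y

/-- Stochastic domination on `ℕ`: `μ({y, y+1, ...}) ≤ μ'({y, y+1, ...})` for all `y`. -/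
def StochDomN (μ μ' : ℕ → ℝ) : Prop :=
  ∀ y : ℕ, (∑' x : {x : ℕ // y ≤ x}, μ x) ≤ ∑' x : {x : ℕ // y ≤ x}, μ' x

/-- `a(ν) = 1 - νQ(0)`: probability of remaining in `S` after one step from `ν`. -/
def stayProbN (Q : ℕ → ℕ → ℝ) (ν : ℕ → ℝ) : ℝ :=
  1 - ∑' x : ℕ, ν x * Q x 0

/-- The point mass at `x`. -/
def deltaN (x : ℕ) : ℕ → ℝ := fun y => if y = x then 1 else 0

def tailMass (μ : ℕ → ℝ) (y : ℕ) : ℝ :=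
  ∑' w : {w : ℕ // y ≤ w}, μ w

instance : Std.Refl StochDomN := ⟨fun _ _ => le_rfl⟩

instance : IsTrans (ℕ → ℝ) StochDomN := ⟨fun _ _ _ h h' y => (h y).trans (h' y)⟩

section ThreePoints

variable {M : Type*} [AddCommMonoid M] [TopologicalSpace M] {f : ℕ → M} {x : ℕ}

theorem tsum_eq_of_far (hx : 1 ≤ x) (hf : ∀ w, w + 1 < x ∨ x + 1 < w → f w = 0) :
    ∑' w, f w = f (x - 1) + f x + f (x + 1) := by
  rw [tsum_eq_sum (s := {x - 1, x, x + 1}) fun w hw => hf w (by simp at hw; omega),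
    Finset.sum_insert (by simp; omega), Finset.sum_pair (by omega), add_assoc]

theorem tsum_subtype_ge_eq_of_far (hx : 1 ≤ x)
    (hf : ∀ w, w + 1 < x ∨ x + 1 < w → f w = 0) (y : ℕ) :
    ∑' w : {w : ℕ // y ≤ w}, f w =
      (if y ≤ x - 1 then f (x - 1) else 0) + (if y ≤ x then f x else 0) +
        (if y ≤ x + 1 then f (x + 1) else 0) := by
  refine (tsum_subtype {w | y ≤ w} f).trans ?_
  rw [tsum_eq_of_far hx fun w hw => by
    rw [Set.indicator_apply, hf w hw, ite_self]]
  simp only [Set.indicator_apply, Set.mem_ofPred_eq]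

end ThreePoints

theorem tailMass_eq_tsum {μ : ℕ → ℝ} {y : ℕ} (hμ : ∀ w < y, μ w = 0) :
    tailMass μ y = ∑' w, μ w :=
  tsum_subtype_eq_of_support_subset fun w hw => not_lt.1 fun h => hw (hμ w h)

theorem tailMass_eq_zero {μ : ℕ → ℝ} {y : ℕ} (hμ : ∀ w, y ≤ w → μ w = 0) :
    tailMass μ y = 0 :=
  (tsum_congr fun w : {w : ℕ // y ≤ w} => hμ w w.2).trans tsum_zero

theorem stochDomN_iff_of_shifted_windows {μ ν : ℕ → ℝ} {x : ℕ} (hx : 1 ≤ x)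
    (hμ : ∀ w, w + 1 < x ∨ x + 1 < w → μ w = 0) (hν : ∀ w, w < x ∨ x + 2 < w → ν w = 0)
    (hμ₀ : ∀ w, 0 ≤ μ w) (hν₀ : ∀ w, 0 ≤ ν w) (hμ₁ : ∑' w, μ w = 1) (hν₁ : ∑' w, ν w = 1) :
    StochDomN μ ν ↔ μ (x + 1) ≤ ν (x + 1) + ν (x + 2) := by
  have hν' : ∀ w, w + 1 < x + 1 ∨ x + 1 + 1 < w → ν w = 0 := fun w hw => hν w (by omega)
  rw [tsum_eq_of_far hx hμ] at hμ₁
  rw [tsum_eq_of_far (by omega) hν', Nat.add_sub_cancel] at hν₁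
  simp only [StochDomN, tsum_subtype_ge_eq_of_far hx hμ,
    tsum_subtype_ge_eq_of_far (by omega : 1 ≤ x + 1) hν', Nat.add_sub_cancel]
  constructor
  · intro h
    simpa (disch := omega) only [if_pos, if_neg, zero_add] using h (x + 1)
  · intro h y
    have := hμ₀ (x - 1)
    have := hν₀ (x + 2)
    split_ifs <;> first | omega | linarith

theorem le_of_mem_pair_of_square_edges {α β : Type*} [PartialOrder α] [Preorder β]
    {t : α → α → β} {a b : α} (hab : a < b) (h₁ : t a a ≤ t b a) (h₂ : t b a ≤ t b b)
    (h₃ : t a a ≤ t a b) (h₄ : t a b ≤ t b b) {x x' z z' : α} (hx : x = a ∨ x = b)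
    (hx' : x' = a ∨ x' = b) (hz : z = a ∨ z = b) (hz' : z' = a ∨ z' = b) (hxx' : x ≤ x')
    (hzz' : z ≤ z') :
    t x z ≤ t x' z' := by
  have hba : ¬b ≤ a := hab.not_ge
  rcases hx with rfl | rfl <;> rcases hx' with rfl | rfl <;> rcases hz with rfl | rfl <;>
    rcases hz' with rfl | rfl <;>
    first | exact le_rfl | exact absurd ‹_› hba | assumption | exact h₁.trans h₂

theorem kpow_one {α : Type*} (Q : α → α → ℝ) (a b : α) : kpow Q 1 a b = Q a b := by
  simp only [kpow, ite_mul, one_mul, zero_mul]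
  exact (tsum_eq_single a fun c hc => if_neg (Ne.symm hc)).trans (if_pos rfl)

theorem kpow_two {α : Type*} (Q : α → α → ℝ) (a c : α) :
    kpow Q 2 a c = ∑' b, Q a b * Q b c := by
  show (∑' b, kpow Q 1 a b * Q b c) = _
  simp only [kpow_one]

section BirthDeath

variable {p r q : ℕ → ℝ}

theorem bdQ_of_eq_add_one {x y : ℕ} (hx : 1 ≤ x) (h : y = x + 1) : bdQ p r q x y = p x := by
  subst h; unfold bdQ; split_ifs <;> first | rfl | omega

theorem bdQ_of_eq_add_one_of_p_zero (hp0 : p 0 = 0) {x y : ℕ} (h : y = x + 1) :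
    bdQ p r q x y = p x := by
  subst h; unfold bdQ; split_ifs <;> first | rfl | omega | simp_all

theorem bdQ_of_add_one_eq {x y : ℕ} (h : x = y + 1) : bdQ p r q x y = q x := by
  subst h; simp [bdQ]

theorem bdQ_self {x : ℕ} (hx : 1 ≤ x) : bdQ p r q x x = r x := by
  unfold bdQ; split_ifs <;> first | rfl | omega

theorem bdQ_of_far {x y : ℕ} (h : y + 1 < x ∨ x + 1 < y) : bdQ p r q x y = 0 := by
  unfold bdQ; split_ifs <;> first | rfl | omega

theorem bdQ_zero_left {y : ℕ} (hy : y ≠ 0) : bdQ p r q 0 y = 0 := by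
  simp [bdQ, hy]

theorem bdQ_nonneg (hp : ∀ x, 1 ≤ x → 0 ≤ p x) (hr : ∀ x, 1 ≤ x → 0 ≤ r x)
    (hq : ∀ x, 1 ≤ x → 0 ≤ q x) (x y : ℕ) : 0 ≤ bdQ p r q x y := by
  rcases Nat.eq_zero_or_pos x with rfl | hx
  · simp only [bdQ, if_true]; split_ifs <;> norm_num
  · simp only [bdQ, hx.ne', if_false]
    split_ifs
    exacts [hq x hx, hr x hx, hp x hx, le_rfl]

theorem bdQ_pos (hp : ∀ x, 1 ≤ x → 0 < p x) (hr : ∀ x, 1 ≤ x → 0 < r x)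
    (hq : ∀ x, 1 ≤ x → 0 < q x) {x y : ℕ} (hx : 1 ≤ x) (hxy : y ≤ x + 1) (hyx : x ≤ y + 1) :
    0 < bdQ p r q x y := by
  obtain rfl | rfl | rfl : x = y + 1 ∨ y = x ∨ y = x + 1 := by omega
  · exact (bdQ_of_add_one_eq rfl).symm ▸ hq _ hx
  · exact (bdQ_self hx).symm ▸ hr _ hx
  · exact (bdQ_of_eq_add_one hx rfl).symm ▸ hp _ hx

theorem kpow_two_bdQ {x : ℕ} (hx : 1 ≤ x) (z : ℕ) :
    kpow (bdQ p r q) 2 x z = bdQ p r q x (x - 1) * bdQ p r q (x - 1) z +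
      bdQ p r q x x * bdQ p r q x z + bdQ p r q x (x + 1) * bdQ p r q (x + 1) z := by
  rw [kpow_two, tsum_eq_of_far hx fun w hw => by rw [bdQ_of_far (by omega), zero_mul]]

theorem kpow_two_bdQ_pos (hp : ∀ x, 1 ≤ x → 0 < p x) (hr : ∀ x, 1 ≤ x → 0 < r x)
    (hq : ∀ x, 1 ≤ x → 0 < q x) {x z : ℕ} (hx : 1 ≤ x) (hxz : z ≤ x + 1) (hzx : x ≤ z + 1) :
    0 < kpow (bdQ p r q) 2 x z := by
  have hQ := bdQ_nonneg (fun x hx => (hp x hx).le) (fun x hx => (hr x hx).le)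
    (fun x hx => (hq x hx).le)
  rw [kpow_two_bdQ hx]
  have := mul_pos (bdQ_pos hp hr hq (y := x) hx (by omega) (by omega))
    (bdQ_pos hp hr hq hx hxz hzx)
  have := mul_nonneg (hQ x (x - 1)) (hQ (x - 1) z)
  have := mul_nonneg (hQ x (x + 1)) (hQ (x + 1) z)
  linarith

theorem one_sub_bdQ_one_zero (hsum : p 1 + r 1 + q 1 = 1) : 1 - bdQ p r q 1 0 = p 1 + r 1 := by
  rw [bdQ_of_add_one_eq rfl]
  linarith

theorem one_sub_bdQ_zero_pos (hsum : p 1 + r 1 + q 1 = 1) (hpr : 0 < p 1 + r 1) {x : ℕ}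
    (hx : 1 ≤ x) : 0 < 1 - bdQ p r q x 0 := by
  rcases hx.eq_or_lt with rfl | hx
  · rwa [one_sub_bdQ_one_zero hsum]
  · rw [bdQ_of_far (by omega), sub_zero]
    exact one_pos

end BirthDeath

section Bridge

variable {p r q : ℕ → ℝ} {x z : ℕ}

def bridgeLaw (p r q : ℕ → ℝ) (x z : ℕ) : ℕ → ℝ := fun w =>
  if w = 0 then 0 else bdQ p r q x w * bdQ p r q w z / kpow (bdQ p r q) 2 x z

theorem bridgeLaw_of_one_le (hz : 1 ≤ z) (w : ℕ) :
    bridgeLaw p r q x z w = bdQ p r q x w * bdQ p r q w z / kpow (bdQ p r q) 2 x z := by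
  unfold bridgeLaw
  split_ifs with hw
  · rw [hw, bdQ_zero_left (by omega), mul_zero, zero_div]
  · rfl

theorem bridgeLaw_eq_zero_of_far {w : ℕ} (h : w + 1 < x ∨ x + 1 < w ∨ w + 1 < z ∨ z + 1 < w) :
    bridgeLaw p r q x z w = 0 := by
  unfold bridgeLaw
  split_ifs
  · rfl
  · have : bdQ p r q x w = 0 ∨ bdQ p r q w z = 0 := by
      rcases h with h | h | h | h
      exacts [.inl (bdQ_of_far (by omega)), .inl (bdQ_of_far (by omega)),
        .inr (bdQ_of_far (by omega)), .inr (bdQ_of_far (by omega))]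
    rcases this with h | h <;> simp [h]

theorem bridgeLaw_nonneg (hQ : ∀ a b, 0 ≤ bdQ p r q a b) (hxz : 0 ≤ kpow (bdQ p r q) 2 x z)
    (w : ℕ) : 0 ≤ bridgeLaw p r q x z w := by
  unfold bridgeLaw
  split_ifs
  exacts [le_rfl, div_nonneg (mul_nonneg (hQ _ _) (hQ _ _)) hxz]

theorem tsum_bridgeLaw (hz : 1 ≤ z) (hxz : kpow (bdQ p r q) 2 x z ≠ 0) :
    ∑' w, bridgeLaw p r q x z w = 1 := by
  simp_rw [bridgeLaw_of_one_le hz, tsum_div_const, ← kpow_two]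
  exact div_self hxz

theorem tailMass_bridgeLaw_le_one (hQ : ∀ a b, 0 ≤ bdQ p r q a b) (hz : 1 ≤ z)
    (hxz : 0 < kpow (bdQ p r q) 2 x z) (y : ℕ) : tailMass (bridgeLaw p r q x z) y ≤ 1 := by
  rw [← tsum_bridgeLaw hz hxz.ne']
  refine Summable.tsum_subtype_le _ {w | y ≤ w} (bridgeLaw_nonneg hQ hxz.le) ?_
  exact summable_of_ne_finset_zero (s := Finset.Icc (x - 1) (x + 1)) fun w hw =>
    bridgeLaw_eq_zero_of_far (by simp at hw; omega)

theorem tailMass_bridgeLaw_nonneg (hQ : ∀ a b, 0 ≤ bdQ p r q a b)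
    (hxz : 0 ≤ kpow (bdQ p r q) 2 x z) (y : ℕ) : 0 ≤ tailMass (bridgeLaw p r q x z) y :=
  tsum_nonneg fun w => bridgeLaw_nonneg hQ hxz w

theorem tailMass_bridgeLaw_eq_one (hz : 1 ≤ z) (hxz : kpow (bdQ p r q) 2 x z ≠ 0) {y : ℕ}
    (hy : y < x ∨ y < z) : tailMass (bridgeLaw p r q x z) y = 1 := by
  rw [tailMass_eq_tsum fun w hw => bridgeLaw_eq_zero_of_far (by omega), tsum_bridgeLaw hz hxz]

theorem tailMass_bridgeLaw_eq_zero {y : ℕ} (hy : x + 1 < y ∨ z + 1 < y) :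
    tailMass (bridgeLaw p r q x z) y = 0 :=
  tailMass_eq_zero fun w hw => bridgeLaw_eq_zero_of_far (by omega)

theorem tailMass_bridgeLaw {y : ℕ} (hx : 1 ≤ x) :
    tailMass (bridgeLaw p r q x z) y =
      (if y ≤ x - 1 then bridgeLaw p r q x z (x - 1) else 0) +
        (if y ≤ x then bridgeLaw p r q x z x else 0) +
        (if y ≤ x + 1 then bridgeLaw p r q x z (x + 1) else 0) :=
  tsum_subtype_ge_eq_of_far (f := bridgeLaw p r q x z) hx
    (fun w hw => bridgeLaw_eq_zero_of_far (by omega)) y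

theorem tailMass_bridgeLaw_pred_pred (hp0 : p 0 = 0) {y : ℕ} (hy : 2 ≤ y) :
    tailMass (bridgeLaw p r q (y - 1) (y - 1)) y =
      p (y - 1) * q y / (r (y - 1) ^ 2 + p (y - 1) * q y + q (y - 1) * p (y - 2)) := by
  rw [tailMass_bridgeLaw (by omega)]
  simp (disch := omega) only [if_pos, if_neg, Nat.sub_add_cancel, bridgeLaw_of_one_le,
    kpow_two_bdQ, bdQ_of_eq_add_one_of_p_zero hp0, bdQ_of_add_one_eq, bdQ_self, zero_add]
  rw [Nat.sub_sub]
  ring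

theorem tailMass_bridgeLaw_self_pred {y : ℕ} (hy : 2 ≤ y) :
    tailMass (bridgeLaw p r q y (y - 1)) y = r y * q y / (q y * r (y - 1) + r y * q y) := by
  rw [tailMass_bridgeLaw (by omega)]
  simp (disch := omega) only [if_pos, if_neg, bridgeLaw_of_one_le, kpow_two_bdQ,
    bdQ_of_eq_add_one, bdQ_of_add_one_eq, bdQ_self, bdQ_of_far, zero_add]
  ring

theorem tailMass_bridgeLaw_self_self (hp0 : p 0 = 0) {y : ℕ} (hy : 2 ≤ y) :
    tailMass (bridgeLaw p r q y y) y =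
      (r y ^ 2 + p y * q (y + 1)) / (r y ^ 2 + p y * q (y + 1) + q y * p (y - 1)) := by
  rw [tailMass_bridgeLaw (by omega)]
  simp (disch := omega) only [if_pos, if_neg, bridgeLaw_of_one_le,
    kpow_two_bdQ, bdQ_of_eq_add_one_of_p_zero hp0, bdQ_of_add_one_eq, bdQ_self, zero_add]
  ring

theorem tailMass_bridgeLaw_pred_self {y : ℕ} (hy : 2 ≤ y) :
    tailMass (bridgeLaw p r q (y - 1) y) y =
      p (y - 1) * r y / (p (y - 1) * r y + r (y - 1) * p (y - 1)) := by
  rw [tailMass_bridgeLaw (by omega)]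
  simp (disch := omega) only [if_pos, if_neg, Nat.sub_add_cancel, bridgeLaw_of_one_le,
    kpow_two_bdQ, bdQ_of_eq_add_one, bdQ_of_add_one_eq, bdQ_self, bdQ_of_far, zero_add]
  ring

theorem tailMass_bridgeLaw_window_iff (hp0 : p 0 = 0) {y : ℕ} (hy : 2 ≤ y) :
    (p (y - 1) * q y / (r (y - 1) ^ 2 + p (y - 1) * q y + q (y - 1) * p (y - 2)) ≤
          r y * q y / (q y * r (y - 1) + r y * q y) ∧
        r y * q y / (q y * r (y - 1) + r y * q y) ≤
          (r y ^ 2 + p y * q (y + 1)) / (r y ^ 2 + p y * q (y + 1) + q y * p (y - 1)) ∧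
        p (y - 1) * q y / (r (y - 1) ^ 2 + p (y - 1) * q y + q (y - 1) * p (y - 2)) ≤
          p (y - 1) * r y / (p (y - 1) * r y + r (y - 1) * p (y - 1)) ∧
        p (y - 1) * r y / (p (y - 1) * r y + r (y - 1) * p (y - 1)) ≤
          (r y ^ 2 + p y * q (y + 1)) / (r y ^ 2 + p y * q (y + 1) + q y * p (y - 1))) ↔
      (tailMass (bridgeLaw p r q (y - 1) (y - 1)) y ≤ tailMass (bridgeLaw p r q y (y - 1)) y ∧
        tailMass (bridgeLaw p r q y (y - 1)) y ≤ tailMass (bridgeLaw p r q y y) y ∧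
        tailMass (bridgeLaw p r q (y - 1) (y - 1)) y ≤ tailMass (bridgeLaw p r q (y - 1) y) y ∧
        tailMass (bridgeLaw p r q (y - 1) y) y ≤ tailMass (bridgeLaw p r q y y) y) := by
  rw [tailMass_bridgeLaw_pred_pred hp0 hy, tailMass_bridgeLaw_self_pred hy,
    tailMass_bridgeLaw_self_self hp0 hy, tailMass_bridgeLaw_pred_self hy]

theorem stochDomN_bridgeLaw_iff (hp : ∀ x, 1 ≤ x → 0 < p x) (hr : ∀ x, 1 ≤ x → 0 < r x)
    (hq : ∀ x, 1 ≤ x → 0 < q x) :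
    (∀ x x' z z' : ℕ, 1 ≤ x → 1 ≤ z → x ≤ x' → z ≤ z' →
        0 < kpow (bdQ p r q) 2 x z → 0 < kpow (bdQ p r q) 2 x' z' →
        StochDomN (bridgeLaw p r q x z) (bridgeLaw p r q x' z')) ↔
      ∀ y : ℕ, 2 ≤ y →
        tailMass (bridgeLaw p r q (y - 1) (y - 1)) y ≤ tailMass (bridgeLaw p r q y (y - 1)) y ∧
        tailMass (bridgeLaw p r q y (y - 1)) y ≤ tailMass (bridgeLaw p r q y y) y ∧
        tailMass (bridgeLaw p r q (y - 1) (y - 1)) y ≤ tailMass (bridgeLaw p r q (y - 1) y) y ∧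
        tailMass (bridgeLaw p r q (y - 1) y) y ≤ tailMass (bridgeLaw p r q y y) y := by
  have hQ := bdQ_nonneg (fun x hx => (hp x hx).le) (fun x hx => (hr x hx).le)
    (fun x hx => (hq x hx).le)
  constructor
  · intro h y hy
    have pos : ∀ x z, y - 1 ≤ x → x ≤ y → y - 1 ≤ z → z ≤ y → 0 < kpow (bdQ p r q) 2 x z :=
      fun x z _ _ _ _ => kpow_two_bdQ_pos hp hr hq (by omega) (by omega) (by omega)
    refine ⟨h (y - 1) y (y - 1) (y - 1) ?_ ?_ ?_ ?_ (pos _ _ ?_ ?_ ?_ ?_) (pos _ _ ?_ ?_ ?_ ?_) y,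
      h y y (y - 1) y ?_ ?_ ?_ ?_ (pos _ _ ?_ ?_ ?_ ?_) (pos _ _ ?_ ?_ ?_ ?_) y,
      h (y - 1) (y - 1) (y - 1) y ?_ ?_ ?_ ?_ (pos _ _ ?_ ?_ ?_ ?_) (pos _ _ ?_ ?_ ?_ ?_) y,
      h (y - 1) y y y ?_ ?_ ?_ ?_ (pos _ _ ?_ ?_ ?_ ?_) (pos _ _ ?_ ?_ ?_ ?_) y⟩ <;> omega
  · intro h x x' z z' hx hz hxx' hzz' hxz hxz' y
    show tailMass _ y ≤ tailMass _ y
    by_cases hlow : y < x' ∨ y < z'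
    · rw [tailMass_bridgeLaw_eq_one (hz.trans hzz') hxz'.ne' hlow]
      exact tailMass_bridgeLaw_le_one hQ hz hxz y
    by_cases hhigh : x + 1 < y ∨ z + 1 < y
    · rw [tailMass_bridgeLaw_eq_zero hhigh]
      exact tailMass_bridgeLaw_nonneg hQ hxz'.le y
    -- Otherwise `x, z, x', z' ∈ {y - 1, y}`.
    rcases lt_or_ge y 2 with hy | hy
    · obtain ⟨rfl, rfl⟩ : x = x' ∧ z = z' := by omega
      exact le_rfl
    obtain ⟨h₁, h₂, h₃, h₄⟩ := h y hy
    exact le_of_mem_pair_of_square_edges (t := fun x z => tailMass (bridgeLaw p r q x z) y)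
      (by omega) h₁ h₂ h₃ h₄ (by omega) (by omega) (by omega) (by omega) hxx' hzz'

end Bridge

section CondStep

variable {p r q : ℕ → ℝ} {x : ℕ}

def condStepLaw (p r q : ℕ → ℝ) (x : ℕ) : ℕ → ℝ := fun w =>
  if w = 0 then 0 else bdQ p r q x w / (1 - bdQ p r q x 0)

theorem condStepLaw_eq_zero_of_far {w : ℕ} (h : w + 1 < x ∨ x + 1 < w) :
    condStepLaw p r q x w = 0 := by
  simp [condStepLaw, bdQ_of_far h]

theorem condStepLaw_of_two_le (hx : 2 ≤ x) : condStepLaw p r q x = bdQ p r q x := by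
  funext w
  rw [condStepLaw, bdQ_of_far (x := x) (y := 0) (by omega), sub_zero]
  split_ifs with hw
  · rw [hw, bdQ_of_far (by omega)]
  · rw [div_one]

theorem condStepLaw_nonneg (hQ : ∀ a b, 0 ≤ bdQ p r q a b) (hx : 0 < 1 - bdQ p r q x 0)
    (w : ℕ) : 0 ≤ condStepLaw p r q x w := by
  unfold condStepLaw
  split_ifs
  exacts [le_rfl, div_nonneg (hQ x w) hx.le]

theorem tsum_condStepLaw (hsum : ∀ x, 1 ≤ x → p x + r x + q x = 1) (hpr : p 1 + r 1 ≠ 0)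
    (hx : 1 ≤ x) : ∑' w, condStepLaw p r q x w = 1 := by
  rw [tsum_eq_of_far hx fun w => condStepLaw_eq_zero_of_far]
  rcases hx.eq_or_lt with rfl | hx
  · simp only [condStepLaw, tsub_self, ↓reduceIte, one_ne_zero, OfNat.ofNat_ne_zero, Nat.reduceAdd,
      bdQ_self le_rfl, bdQ_of_eq_add_one (p := p) (r := r) (q := q) le_rfl rfl,
      one_sub_bdQ_one_zero (hsum 1 le_rfl), zero_add]
    rw [← add_div, add_comm]
    exact div_self hpr
  · rw [condStepLaw_of_two_le hx, bdQ_of_add_one_eq (by omega), bdQ_self (by omega),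
      bdQ_of_eq_add_one (by omega) rfl]
    linarith [hsum x (by omega)]

theorem stochDomN_condStepLaw_succ_iff (hQ : ∀ a b, 0 ≤ bdQ p r q a b)
    (hsum : ∀ x, 1 ≤ x → p x + r x + q x = 1) (hpr : 0 < p 1 + r 1) (hx : 1 ≤ x) :
    StochDomN (condStepLaw p r q x) (condStepLaw p r q (x + 1)) ↔
      p x / (1 - bdQ p r q x 0) ≤ r (x + 1) + p (x + 1) := by
  have hstay : ∀ x, 1 ≤ x → 0 < 1 - bdQ p r q x 0 :=
    fun x hx => one_sub_bdQ_zero_pos (hsum 1 le_rfl) hpr hx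
  rw [stochDomN_iff_of_shifted_windows hx (fun w => condStepLaw_eq_zero_of_far)
    (fun w hw => condStepLaw_eq_zero_of_far (by omega)) (condStepLaw_nonneg hQ (hstay x hx))
    (condStepLaw_nonneg hQ (hstay (x + 1) (by omega))) (tsum_condStepLaw hsum hpr.ne' hx)
    (tsum_condStepLaw hsum hpr.ne' (by omega)), condStepLaw_of_two_le (by omega : 2 ≤ x + 1),
    bdQ_self (by omega), bdQ_of_eq_add_one (by omega) rfl]
  simp [condStepLaw, bdQ_of_eq_add_one hx rfl]

theorem stochDomN_condStepLaw_iff (hp : ∀ x, 1 ≤ x → 0 < p x) (hr : ∀ x, 1 ≤ x → 0 < r x)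
    (hq : ∀ x, 1 ≤ x → 0 < q x) (hsum : ∀ x, 1 ≤ x → p x + r x + q x = 1) :
    (∀ x x' : ℕ, 1 ≤ x → x ≤ x' → StochDomN (condStepLaw p r q x) (condStepLaw p r q x')) ↔
      (p 1 / (p 1 + r 1) ≤ r 2 + p 2 ∧ ∀ y : ℕ, 3 ≤ y → p (y - 1) ≤ p y + r y) := by
  have hQ := bdQ_nonneg (fun x hx => (hp x hx).le) (fun x hx => (hr x hx).le)
    (fun x hx => (hq x hx).le)
  have step := fun x (hx : 1 ≤ x) =>
    stochDomN_condStepLaw_succ_iff hQ hsum (add_pos (hp 1 le_rfl) (hr 1 le_rfl)) hx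
  have hstay₁ : 1 - bdQ p r q 1 0 = p 1 + r 1 := one_sub_bdQ_one_zero (hsum 1 le_rfl)
  have hstay : ∀ x, 2 ≤ x → 1 - bdQ p r q x 0 = 1 := fun x hx => by
    rw [bdQ_of_far (by omega), sub_zero]
  constructor
  · intro h
    refine ⟨?_, fun y hy => ?_⟩
    · simpa [hstay₁] using (step 1 le_rfl).1 (h 1 2 le_rfl one_le_two)
    · obtain ⟨x, rfl⟩ : ∃ x, y = x + 1 := ⟨y - 1, by omega⟩
      have := (step x (by omega)).1 (h x (x + 1) (by omega) x.le_succ)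
      rw [hstay x (by omega), div_one] at this
      rw [Nat.add_sub_cancel]
      linarith
  · rintro ⟨h₁, h₃⟩ x x' hx hxx'
    refine Nat.rel_of_forall_rel_succ_of_le_of_le StochDomN (fun n hn => (step n hn).2 ?_) hx hxx'
    rcases hn.eq_or_lt with rfl | hn
    · rwa [hstay₁]
    · have := h₃ (n + 1) (by omega)
      rw [Nat.add_sub_cancel] at this
      rw [hstay n hn, div_one]
      linarith

end CondStep

/-- For the birth-and-death matrix `Q` with parameters `(p_x, r_x, q_x)` (and the
convention `p_0 = 0`), the stochastic-domination conditions (e2) and (e3) are together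
equivalent to the explicit inequalities (bb2) and (bb3). -/
theorem bd_conditions_equiv (p r q : ℕ → ℝ)
    (hp : ∀ x, 1 ≤ x → 0 < p x) (hr : ∀ x, 1 ≤ x → 0 < r x)
    (hq : ∀ x, 1 ≤ x → 0 < q x)
    (hsum : ∀ x, 1 ≤ x → p x + r x + q x = 1)
    (hp0 : p 0 = 0) :
    ((∀ x x' z z' : ℕ, 1 ≤ x → 1 ≤ z → x ≤ x' → z ≤ z' →
        0 < kpow (bdQ p r q) 2 x z → 0 < kpow (bdQ p r q) 2 x' z' →
        StochDomN
          (fun w => if w = 0 then 0 else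
            bdQ p r q x w * bdQ p r q w z / kpow (bdQ p r q) 2 x z)
          (fun w => if w = 0 then 0 else
            bdQ p r q x' w * bdQ p r q w z' / kpow (bdQ p r q) 2 x' z')) ∧
      (∀ x x' : ℕ, 1 ≤ x → x ≤ x' →
        StochDomN
          (fun w => if w = 0 then 0 else bdQ p r q x w / (1 - bdQ p r q x 0))
          (fun w => if w = 0 then 0 else bdQ p r q x' w / (1 - bdQ p r q x' 0))))
    ↔
    ((∀ y : ℕ, 2 ≤ y →
        (p (y-1) * q y / (r (y-1) ^ 2 + p (y-1) * q y + q (y-1) * p (y-2)) ≤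
            r y * q y / (q y * r (y-1) + r y * q y) ∧
          r y * q y / (q y * r (y-1) + r y * q y) ≤
            (r y ^ 2 + p y * q (y+1)) / (r y ^ 2 + p y * q (y+1) + q y * p (y-1)) ∧
          p (y-1) * q y / (r (y-1) ^ 2 + p (y-1) * q y + q (y-1) * p (y-2)) ≤
            p (y-1) * r y / (p (y-1) * r y + r (y-1) * p (y-1)) ∧
          p (y-1) * r y / (p (y-1) * r y + r (y-1) * p (y-1)) ≤
            (r y ^ 2 + p y * q (y+1)) / (r y ^ 2 + p y * q (y+1) + q y * p (y-1)))) ∧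
      (p 1 / (p 1 + r 1) ≤ r 2 + p 2 ∧ ∀ y : ℕ, 3 ≤ y → p (y-1) ≤ p y + r y)) := by
  refine and_congr ((stochDomN_bridgeLaw_iff hp hr hq).trans ?_)
    (stochDomN_condStepLaw_iff hp hr hq hsum)
  exact forall₂_congr fun y hy => (tailMass_bridgeLaw_window_iff hp0 hy).symm
end
end

section
/- Under the periodic hypotheses (HP), assume additionally that Q is such that ν ≺ ν' implies a(ν) ≤ a(ν') for probabilities ν, ν' on S. Then the quasi-stationary distribution ν_⋆ of the periodic Yaglom limit satisfies a(ν_⋆) = inf{a(ν) : ν is a qsd}; that is, ν_⋆ is the minimal quasi-stationary distribution. -/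
open scoped Classical

noncomputable section

/-- Law at time `n` of the chain started from `ν` on `S`, evaluated at a point of
`S ∪ {0}` (represented as `Option S`, with `none` the absorbing state `0`). -/
def evolve {S : Type*} (Q : Option S → Option S → ℝ) (ν : S → ℝ) (n : ℕ)
    (y : Option S) : ℝ :=
  ∑' x : S, ν x * kpow Q n (some x) y

/-- `νT_n(y) = νQ^n(y) / (1 - νQ^n(0))`: the law at time `n` conditioned on
non-absorption up to time `n`.  (For `n = 0` this is `ν` itself.) -/
def condT {S : Type*} (Q : Option S → Option S → ℝ) (ν : S → ℝ) (n : ℕ) (y : S) : ℝ :=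
  evolve Q ν n (some y) / (1 - evolve Q ν n none)

/-- A probability measure on a countable set, as a nonnegative function summing to 1. -/
def IsProbability {α : Type*} (ν : α → ℝ) : Prop :=
  (∀ x, 0 ≤ ν x) ∧ HasSum ν 1

/-- Stochastic domination `μ ≺ μ'`: there is a coupling of `μ` and `μ'` supported
on `{(ω, ω') : ω ≤ ω'}`. -/
def StochDom {α : Type*} [Preorder α] (μ μ' : α → ℝ) : Prop :=
  ∃ π : α × α → ℝ, (∀ p, 0 ≤ π p) ∧ (∀ a, HasSum (fun b => π (a, b)) (μ a)) ∧
    (∀ b, HasSum (fun a => π (a, b)) (μ' b)) ∧ ∀ p, π p ≠ 0 → p.1 ≤ p.2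

/-- A measure on a product space is irreducible if any element of its support can be
reached from any other by successive single-coordinate changes staying in the support. -/
def IrreducibleMeasure {ι α : Type*} (μ : (ι → α) → ℝ) : Prop :=
  ∀ a b, μ a ≠ 0 → μ b ≠ 0 →
    Relation.ReflTransGen
      (fun u v => μ u ≠ 0 ∧ μ v ≠ 0 ∧ ∃ k, ∀ i, i ≠ k → u i = v i) a b

/-- The (unnormalized) law `(x_0,...,x_n) ↦ ν(x_0)Q(x_0,x_1)⋯Q(x_{n-1},x_n)` of a
length-`n` trajectory staying in `S`. -/
def trajMeasure {S : Type*} (Q : Option S → Option S → ℝ) (ν : S → ℝ) (n : ℕ)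
    (x : Fin (n + 1) → S) : ℝ :=
  ν (x 0) * ∏ k : Fin n, Q (some (x k.castSucc)) (some (x k.succ))


/-- `a(ν) = 1 - νQ(0)`: the probability of remaining in `S` after one step,
starting from `ν`. -/
def stayProb {S : Type*} (Q : Option S → Option S → ℝ) (ν : S → ℝ) : ℝ :=
  1 - ∑' x : S, ν x * Q (some x) none

/-- `ν(S_j)`: total mass given by `ν` to the cyclic subclass with label `j`
(the classes being the fibers of the labeling function `c`). -/
def classMass {S : Type*} {d : ℕ} (c : S → ZMod d) (ν : S → ℝ) (j : ZMod d) : ℝ :=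
  ∑' x : S, if c x = j then ν x else 0

/-- `ν(· | S_j)`: conditional law of `ν` given the cyclic subclass with label `j`. -/
def condClass {S : Type*} {d : ℕ} (c : S → ZMod d) (ν : S → ℝ) (j : ZMod d) : S → ℝ :=
  fun y => if c y = j then ν y / classMass c ν j else 0

/-!
For a qsd `ν` with `a = a(ν)`, the equation `νQ = a ν` restricted to the class `S_{j+1}` says
that `a ν(S_{j+1})` is the mass of `ν` on `S_j` that survives one step, that is
`ν(S_j) a(ν(· | S_j))`, because the chain moves from `S_j` only to `S_{j+1}` or to `0`.
In particular `ν(S_j) = 0` would force `ν(S_{j+1}) = 0`, so every class has positive mass.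
Multiplying over the `d` classes, the masses `ν(S_j)` cancel and `a(ν)^d = ∏_j a(ν(· | S_j))`.
Since `ν_⋆(· | S_j) ≺ ν(· | S_j)` and `a` is monotone for `≺`, every factor for `ν_⋆` is at most
the corresponding factor for `ν`, so `a(ν_⋆) ≤ a(ν)`; and `ν_⋆` is itself a qsd.
-/

section Summation

variable {α β : Type*}

theorem hasSum_comp_some {M : Type*} [AddCommGroup M] [TopologicalSpace M]
    [IsTopologicalAddGroup M] {f : Option α → M} {s : M} (h : HasSum f s) :
    HasSum (fun x => f (some x)) (s - f none) := by
  have h' := hasSum_ite_sub_hasSum h none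
  rw [← (Option.some_injective α).hasSum_iff] at h'
  · simpa [Function.comp_def] using h'
  · rintro (_ | x) hx
    · simp
    · exact absurd ⟨x, rfl⟩ hx

theorem summable_mul_of_le_one {μ g : α → ℝ} (hμ : ∀ x, 0 ≤ μ x) (hμs : Summable μ)
    (hg₀ : ∀ x, 0 ≤ g x) (hg₁ : ∀ x, g x ≤ 1) : Summable fun x => μ x * g x :=
  hμs.of_nonneg_of_le (fun x => mul_nonneg (hμ x) (hg₀ x))
    fun x => mul_le_of_le_one_right (hμ x) (hg₁ x)

theorem tsum_comm_of_nonneg {f : α → β → ℝ} (hf : ∀ a b, 0 ≤ f a b)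
    (hrow : ∀ a, Summable (f a)) (htot : Summable fun a => ∑' b, f a b) :
    ∑' b, ∑' a, f a b = ∑' a, ∑' b, f a b :=
  ((summable_prod_of_nonneg (f := Function.uncurry f) fun p => hf p.1 p.2).2
    ⟨hrow, htot⟩).tsum_comm

theorem IsProbability.exists_pos {ν : α → ℝ} (hν : IsProbability ν) : ∃ x, 0 < ν x := by
  by_contra! h
  have hzero : ν = 0 := funext fun x => le_antisymm (h x) (hν.1 x)
  exact one_ne_zero (hν.2.unique (hzero ▸ hasSum_zero))

end Summation

theorem ZMod.forall_of_forall_add_one {d : ℕ} [NeZero d] {P : ZMod d → Prop} {j₀ : ZMod d}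
    (h₀ : P j₀) (h : ∀ j, P j → P (j + 1)) (j : ZMod d) : P j := by
  have hstep : ∀ k : ℕ, P (j₀ + k) := by
    intro k
    induction k with
    | zero => simpa using h₀
    | succ k ih => simpa [add_assoc] using h _ ih
  simpa using hstep (j - j₀).val

section Chain

variable {S : Type*} {Q : Option S → Option S → ℝ}

theorem kernel_le_one (hQnn : ∀ a b, 0 ≤ Q a b) (hQrow : ∀ a, HasSum (Q a) 1)
    (a b : Option S) : Q a b ≤ 1 :=
  le_hasSum (hQrow a) b fun c _ => hQnn a c

theorem hasSum_kernel_some (hQrow : ∀ a, HasSum (Q a) 1) (a : Option S) :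
    HasSum (fun y : S => Q a (some y)) (1 - Q a none) :=
  hasSum_comp_some (hQrow a)

theorem evolve_one (ν : S → ℝ) (y : Option S) :
    evolve Q ν 1 y = ∑' x, ν x * Q (some x) y := by
  simp only [evolve, kpow_one]

def survivalMass (Q : Option S → Option S → ℝ) (μ : S → ℝ) : ℝ :=
  ∑' x, μ x * (1 - Q (some x) none)

theorem survivalMass_eq_sub (hQnn : ∀ a b, 0 ≤ Q a b) (hQrow : ∀ a, HasSum (Q a) 1)
    {μ : S → ℝ} {m : ℝ} (hμ : ∀ x, 0 ≤ μ x) (hμm : HasSum μ m) :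
    survivalMass Q μ = m - ∑' x, μ x * Q (some x) none := by
  have hs : Summable fun x => μ x * Q (some x) none :=
    summable_mul_of_le_one hμ hμm.summable (fun x => hQnn _ _)
      fun x => kernel_le_one hQnn hQrow _ _
  rw [survivalMass, ← hμm.tsum_eq, ← hμm.summable.tsum_sub hs]
  exact tsum_congr fun x => by ring

theorem survivalMass_le (hQnn : ∀ a b, 0 ≤ Q a b) (hQrow : ∀ a, HasSum (Q a) 1)
    {μ : S → ℝ} {m : ℝ} (hμ : ∀ x, 0 ≤ μ x) (hμm : HasSum μ m) : survivalMass Q μ ≤ m := by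
  rw [survivalMass_eq_sub hQnn hQrow hμ hμm, sub_le_self_iff]
  exact tsum_nonneg fun x => mul_nonneg (hμ x) (hQnn _ _)

theorem survivalMass_pos (hQnn : ∀ a b, 0 ≤ Q a b) (hQrow : ∀ a, HasSum (Q a) 1)
    (hQx0 : ∀ x : S, Q (some x) none < 1) {μ : S → ℝ} (hμ : ∀ x, 0 ≤ μ x)
    (hμs : Summable μ) {x : S} (hx : 0 < μ x) : 0 < survivalMass Q μ :=
  (summable_mul_of_le_one hμ hμs (fun _ => sub_nonneg.2 (kernel_le_one hQnn hQrow _ _))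
      fun _ => sub_le_self _ (hQnn _ _)).tsum_pos
    (fun y => mul_nonneg (hμ y) (sub_nonneg.2 (kernel_le_one hQnn hQrow _ _))) x
    (mul_pos hx (sub_pos.2 (hQx0 x)))

theorem stayProb_eq_survivalMass (hQnn : ∀ a b, 0 ≤ Q a b) (hQrow : ∀ a, HasSum (Q a) 1)
    {ν : S → ℝ} (hν : IsProbability ν) : stayProb Q ν = survivalMass Q ν := by
  rw [survivalMass_eq_sub hQnn hQrow hν.1 hν.2]
  rfl

theorem stayProb_div (hQnn : ∀ a b, 0 ≤ Q a b) (hQrow : ∀ a, HasSum (Q a) 1)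
    {μ : S → ℝ} {m : ℝ} (hμ : ∀ x, 0 ≤ μ x) (hμm : HasSum μ m) (hm : m ≠ 0) :
    stayProb Q (fun x => μ x / m) = survivalMass Q μ / m := by
  rw [survivalMass_eq_sub hQnn hQrow hμ hμm, stayProb]
  simp_rw [div_mul_eq_mul_div, tsum_div_const]
  field_simp

theorem stayProb_pos (hQnn : ∀ a b, 0 ≤ Q a b) (hQrow : ∀ a, HasSum (Q a) 1)
    (hQx0 : ∀ x : S, Q (some x) none < 1) {ν : S → ℝ} (hν : IsProbability ν) :
    0 < stayProb Q ν := by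
  obtain ⟨x, hx⟩ := hν.exists_pos
  rw [stayProb_eq_survivalMass hQnn hQrow hν]
  exact survivalMass_pos hQnn hQrow hQx0 hν.1 hν.2.summable hx

theorem tsum_mul_kernel_of_qsd (hQnn : ∀ a b, 0 ≤ Q a b) (hQrow : ∀ a, HasSum (Q a) 1)
    (hQx0 : ∀ x : S, Q (some x) none < 1) {ν : S → ℝ} (hν : IsProbability ν)
    (hqsd : ∀ y, condT Q ν 1 y = ν y) (y : S) :
    ∑' x, ν x * Q (some x) (some y) = stayProb Q ν * ν y := by
  have hden : 1 - evolve Q ν 1 none = stayProb Q ν := by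
    rw [evolve_one]
    rfl
  have h := hqsd y
  rw [condT, hden, evolve_one, div_eq_iff (stayProb_pos hQnn hQrow hQx0 hν).ne'] at h
  rw [h, mul_comm]

end Chain

section Classes

variable {S : Type*} {Q : Option S → Option S → ℝ} {d : ℕ} (c : S → ZMod d)

def restrictClass (ν : S → ℝ) (j : ZMod d) : S → ℝ :=
  fun x => if c x = j then ν x else 0

theorem restrictClass_nonneg {ν : S → ℝ} (hν : ∀ x, 0 ≤ ν x) (j : ZMod d) (x : S) :
    0 ≤ restrictClass c ν j x := by
  unfold restrictClass
  split_ifs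
  exacts [hν x, le_rfl]

theorem hasSum_restrictClass {ν : S → ℝ} (hν : ∀ x, 0 ≤ ν x) (hνs : Summable ν)
    (j : ZMod d) : HasSum (restrictClass c ν j) (classMass c ν j) :=
  (hνs.of_nonneg_of_le (restrictClass_nonneg c hν j) fun x => by
    unfold restrictClass
    split_ifs
    exacts [le_rfl, hν x]).hasSum

variable {c}

theorem condClass_eq_div (ν : S → ℝ) (j : ZMod d) :
    condClass c ν j = fun y => restrictClass c ν j y / classMass c ν j := by
  ext y
  simp only [condClass, restrictClass, ite_div, zero_div]

variable (c) in
theorem sum_classMass [NeZero d] {ν : S → ℝ} (hν : IsProbability ν) :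
    ∑ j, classMass c ν j = 1 := by
  calc ∑ j, classMass c ν j = ∑' x, ∑ j, restrictClass c ν j x :=
        (Summable.tsum_finsetSum fun j _ =>
          (hasSum_restrictClass c hν.1 hν.2.summable j).summable).symm
    _ = ∑' x, ν x := tsum_congr fun x => by simp [restrictClass]
    _ = 1 := hν.2.tsum_eq

theorem stayProb_condClass (hQnn : ∀ a b, 0 ≤ Q a b) (hQrow : ∀ a, HasSum (Q a) 1)
    {ν : S → ℝ} (hν : IsProbability ν) {j : ZMod d} (hm : classMass c ν j ≠ 0) :
    stayProb Q (condClass c ν j) = survivalMass Q (restrictClass c ν j) / classMass c ν j := by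
  rw [condClass_eq_div]
  exact stayProb_div hQnn hQrow (restrictClass_nonneg c hν.1 j)
    (hasSum_restrictClass c hν.1 hν.2.summable j) hm

theorem condClass_isProbability {ν : S → ℝ} (hν : IsProbability ν) {j : ZMod d}
    (hm : 0 < classMass c ν j) : IsProbability (condClass c ν j) := by
  rw [condClass_eq_div]
  refine ⟨fun y => div_nonneg (restrictClass_nonneg c hν.1 j y) hm.le, ?_⟩
  simpa [hm.ne'] using (hasSum_restrictClass c hν.1 hν.2.summable j).div_const (classMass c ν j)

theorem stayProb_mul_classMass_add_one (hQnn : ∀ a b, 0 ≤ Q a b)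
    (hQrow : ∀ a, HasSum (Q a) 1) (hQx0 : ∀ x : S, Q (some x) none < 1)
    (hcQ : ∀ x y : S, Q (some x) (some y) ≠ 0 → c y = c x + 1)
    {ν : S → ℝ} (hν : IsProbability ν) (hqsd : ∀ y, condT Q ν 1 y = ν y) (j : ZMod d) :
    stayProb Q ν * classMass c ν (j + 1) = survivalMass Q (restrictClass c ν j) := by
  set μ := restrictClass c ν j
  have hμ := restrictClass_nonneg c hν.1 j
  have hswap : ∀ x y, (if c y = j + 1 then ν x * Q (some x) (some y) else 0) =
      μ x * Q (some x) (some y) := by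
    intro x y
    by_cases hQ : Q (some x) (some y) = 0
    · simp [hQ]
    · simp only [μ, restrictClass, hcQ x y hQ, add_left_inj, ite_mul, zero_mul]
  have hrow : ∀ x, HasSum (fun y => μ x * Q (some x) (some y)) (μ x * (1 - Q (some x) none)) :=
    fun x => (hasSum_kernel_some hQrow (some x)).mul_left (μ x)
  calc stayProb Q ν * classMass c ν (j + 1)
      = ∑' y, ∑' x, if c y = j + 1 then ν x * Q (some x) (some y) else 0 := by
        rw [classMass, ← tsum_mul_left]
        refine tsum_congr fun y => ?_
        split_ifs
        · exact (tsum_mul_kernel_of_qsd hQnn hQrow hQx0 hν hqsd y).symm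
        · simp
    _ = ∑' y, ∑' x, μ x * Q (some x) (some y) := by simp_rw [hswap]
    _ = ∑' x, ∑' y, μ x * Q (some x) (some y) := by
        refine tsum_comm_of_nonneg (fun x y => mul_nonneg (hμ x) (hQnn _ _))
          (fun x => (hrow x).summable) ?_
        simp_rw [fun x => (hrow x).tsum_eq]
        exact summable_mul_of_le_one hμ (hasSum_restrictClass c hν.1 hν.2.summable j).summable
          (fun x => sub_nonneg.2 (kernel_le_one hQnn hQrow _ _))
          fun x => sub_le_self _ (hQnn _ _)
    _ = survivalMass Q μ := tsum_congr fun x => (hrow x).tsum_eq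

theorem classMass_pos_of_qsd [NeZero d] (hQnn : ∀ a b, 0 ≤ Q a b)
    (hQrow : ∀ a, HasSum (Q a) 1) (hQx0 : ∀ x : S, Q (some x) none < 1)
    (hcQ : ∀ x y : S, Q (some x) (some y) ≠ 0 → c y = c x + 1)
    {ν : S → ℝ} (hν : IsProbability ν) (hqsd : ∀ y, condT Q ν 1 y = ν y) (j : ZMod d) :
    0 < classMass c ν j := by
  have hm : ∀ j, 0 ≤ classMass c ν j := fun j =>
    (hasSum_restrictClass c hν.1 hν.2.summable j).nonneg (restrictClass_nonneg c hν.1 j)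
  have hzero : ∀ j, classMass c ν j = 0 → classMass c ν (j + 1) = 0 := by
    intro j hj
    have hflow := stayProb_mul_classMass_add_one hQnn hQrow hQx0 hcQ hν hqsd j
    have hle := survivalMass_le hQnn hQrow (restrictClass_nonneg c hν.1 j)
      (hasSum_restrictClass c hν.1 hν.2.summable j)
    have ha := stayProb_pos hQnn hQrow hQx0 hν
    nlinarith [hm (j + 1)]
  by_contra! hj
  have hall := ZMod.forall_of_forall_add_one (P := fun j => classMass c ν j = 0)
    (le_antisymm hj (hm j)) hzero
  simpa [hall] using sum_classMass c hν

theorem condClass_isProbability_of_qsd [NeZero d] (hQnn : ∀ a b, 0 ≤ Q a b)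
    (hQrow : ∀ a, HasSum (Q a) 1) (hQx0 : ∀ x : S, Q (some x) none < 1)
    (hcQ : ∀ x y : S, Q (some x) (some y) ≠ 0 → c y = c x + 1)
    {ν : S → ℝ} (hν : IsProbability ν) (hqsd : ∀ y, condT Q ν 1 y = ν y) (j : ZMod d) :
    IsProbability (condClass c ν j) :=
  condClass_isProbability hν (classMass_pos_of_qsd hQnn hQrow hQx0 hcQ hν hqsd j)

theorem stayProb_pow_eq_prod_condClass [NeZero d] (hQnn : ∀ a b, 0 ≤ Q a b)
    (hQrow : ∀ a, HasSum (Q a) 1) (hQx0 : ∀ x : S, Q (some x) none < 1)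
    (hcQ : ∀ x y : S, Q (some x) (some y) ≠ 0 → c y = c x + 1)
    {ν : S → ℝ} (hν : IsProbability ν) (hqsd : ∀ y, condT Q ν 1 y = ν y) :
    stayProb Q ν ^ d = ∏ j, stayProb Q (condClass c ν j) := by
  have hm := classMass_pos_of_qsd hQnn hQrow hQx0 hcQ hν hqsd
  have hshift : ∏ j, classMass c ν (j + 1) = ∏ j, classMass c ν j :=
    Fintype.prod_equiv (Equiv.addRight 1) _ _ fun _ => rfl
  refine mul_right_cancel₀ (Finset.prod_pos (s := Finset.univ) fun j _ => hm j).ne' ?_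
  calc stayProb Q ν ^ d * ∏ j, classMass c ν j
      = ∏ j, stayProb Q ν * classMass c ν (j + 1) := by
        rw [Finset.prod_mul_distrib, Finset.prod_const, Finset.card_univ, ZMod.card, hshift]
    _ = ∏ j, survivalMass Q (restrictClass c ν j) := Finset.prod_congr rfl fun j _ =>
        stayProb_mul_classMass_add_one hQnn hQrow hQx0 hcQ hν hqsd j
    _ = ∏ j, stayProb Q (condClass c ν j) * classMass c ν j := Finset.prod_congr rfl fun j _ => by
        rw [stayProb_condClass hQnn hQrow hν (hm j).ne', div_mul_cancel₀ _ (hm j).ne']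
    _ = (∏ j, stayProb Q (condClass c ν j)) * ∏ j, classMass c ν j := Finset.prod_mul_distrib

theorem stayProb_le_of_forall_stayProb_condClass_le [NeZero d] (hQnn : ∀ a b, 0 ≤ Q a b)
    (hQrow : ∀ a, HasSum (Q a) 1) (hQx0 : ∀ x : S, Q (some x) none < 1)
    (hcQ : ∀ x y : S, Q (some x) (some y) ≠ 0 → c y = c x + 1)
    {ν ν' : S → ℝ} (hν : IsProbability ν) (hqsd : ∀ y, condT Q ν 1 y = ν y)
    (hν' : IsProbability ν') (hqsd' : ∀ y, condT Q ν' 1 y = ν' y)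
    (hle : ∀ j, stayProb Q (condClass c ν j) ≤ stayProb Q (condClass c ν' j)) :
    stayProb Q ν ≤ stayProb Q ν' := by
  have hpow : stayProb Q ν ^ d ≤ stayProb Q ν' ^ d := by
    rw [stayProb_pow_eq_prod_condClass hQnn hQrow hQx0 hcQ hν hqsd,
      stayProb_pow_eq_prod_condClass hQnn hQrow hQx0 hcQ hν' hqsd']
    exact Finset.prod_le_prod (fun j _ => (stayProb_pos hQnn hQrow hQx0
      (condClass_isProbability_of_qsd hQnn hQrow hQx0 hcQ hν hqsd j)).le) fun j _ => hle j
  exact (pow_le_pow_iff_left₀ (stayProb_pos hQnn hQrow hQx0 hν).le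
    (stayProb_pos hQnn hQrow hQx0 hν').le (NeZero.ne d)).1 hpow

end Classes

theorem periodic_minimal_qsd_general {S : Type*} [PartialOrder S]
    (Q : Option S → Option S → ℝ) (d : ℕ) (hd : 2 ≤ d)
    (c : S → ZMod d)
    (hQnn : ∀ a b, 0 ≤ Q a b)
    (hQrow : ∀ a, HasSum (Q a) 1)
    (hQx0 : ∀ x : S, Q (some x) none < 1)
    (hcQ : ∀ x y : S, Q (some x) (some y) ≠ 0 → c y = c x + 1)
    (hmono : ∀ ν ν' : S → ℝ, IsProbability ν → IsProbability ν' →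
      StochDom ν ν' → stayProb Q ν ≤ stayProb Q ν')
    (νstar : S → ℝ) (hνstar : IsProbability νstar)
    (hqsdstar : ∀ y, condT Q νstar 1 y = νstar y)
    (hdomstar : ∀ ν : S → ℝ, IsProbability ν → (∀ y, condT Q ν 1 y = ν y) →
      ∀ j : ℕ, 1 ≤ j → j ≤ d →
        StochDom (condClass c νstar ((j - 1 : ℕ) : ZMod d))
          (condClass c ν ((j - 1 : ℕ) : ZMod d))) :
    stayProb Q νstar =
      sInf {a : ℝ | ∃ ν : S → ℝ, IsProbability ν ∧ (∀ y, condT Q ν 1 y = ν y) ∧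
        a = stayProb Q ν} := by
  have : NeZero d := ⟨by omega⟩
  symm
  refine IsLeast.csInf_eq ⟨⟨νstar, hνstar, hqsdstar, rfl⟩, ?_⟩
  rintro _ ⟨ν, hν, hqsd, rfl⟩
  refine stayProb_le_of_forall_stayProb_condClass_le hQnn hQrow hQx0 hcQ hνstar hqsdstar
    hν hqsd fun j => ?_
  have hdom := hdomstar ν hν hqsd (j.val + 1) (by omega) (Nat.succ_le_of_lt (ZMod.val_lt j))
  rw [Nat.add_sub_cancel, ZMod.natCast_zmod_val] at hdom
  exact hmono _ _ (condClass_isProbability_of_qsd hQnn hQrow hQx0 hcQ hνstar hqsdstar j)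
    (condClass_isProbability_of_qsd hQnn hQrow hQx0 hcQ hν hqsd j) hdom

/-- Under the periodic hypotheses (HP), if moreover `ν ≺ ν'` implies `a(ν) ≤ a(ν')`,
then the qsd `ν_⋆` produced by the periodic Yaglom limit of `δ₁` satisfies
`a(ν_⋆) = inf{a(ν) : ν qsd}`: it is the minimal qsd. -/
theorem periodic_minimal_qsd {S : Type*} [PartialOrder S] [Countable S]
    (Q : Option S → Option S → ℝ) (one : S) (d : ℕ) (hd : 2 ≤ d)
    (c : S → ZMod d)
    (hmin : ∀ x : S, one ≤ x)
    (hQnn : ∀ a b, 0 ≤ Q a b)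
    (hQrow : ∀ a, HasSum (Q a) 1)
    (hQ00 : Q none none = 1)
    (hQx0 : ∀ x : S, Q (some x) none < 1)
    (hirr : ∀ x y : S, ∃ n : ℕ, 1 ≤ n ∧ 0 < kpow Q n (some x) (some y))
    (hperiod : ∀ x : S,
      (∀ n, 1 ≤ n → 0 < kpow Q n (some x) (some x) → d ∣ n) ∧
      (∀ m : ℕ, (∀ n, 1 ≤ n → 0 < kpow Q n (some x) (some x) → m ∣ n) → m ∣ d))
    (hc1 : c one = 0)
    (hcQ : ∀ x y : S, Q (some x) (some y) ≠ 0 → c y = c x + 1)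
    (hclass : ∀ x y : S, c x = c y ↔
      ∃ l : ℕ, 1 ≤ l ∧ 0 < kpow Q (d * l) (some x) (some y))
    (hirrtraj : ∀ n : ℕ, 1 ≤ n →
      IrreducibleMeasure (trajMeasure Q (fun x => if x = one then 1 else 0) n))
    (he2 : ∀ x x' z z' : S, c x = c x' → x ≤ x' → z ≤ z' →
      0 < kpow Q 2 (some x) (some z) → 0 < kpow Q 2 (some x') (some z') →
      StochDom
        (fun w : S => Q (some x) (some w) * Q (some w) (some z) /
          kpow Q 2 (some x) (some z))
        (fun w : S => Q (some x') (some w) * Q (some w) (some z') /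
          kpow Q 2 (some x') (some z')))
    (he3 : ∀ x x' : S, c x = c x' → x ≤ x' →
      StochDom (fun w : S => Q (some x) (some w) / (1 - Q (some x) none))
        (fun w : S => Q (some x') (some w) / (1 - Q (some x') none)))
    (hmono : ∀ ν ν' : S → ℝ, IsProbability ν → IsProbability ν' →
      StochDom ν ν' → stayProb Q ν ≤ stayProb Q ν')
    (νstar : S → ℝ) (hνstar : IsProbability νstar)
    (hqsdstar : ∀ y, condT Q νstar 1 y = νstar y)
    (hlim : ∀ j : ℕ, 1 ≤ j → j ≤ d → ∀ y : S, Filter.Tendsto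
      (fun k => condT Q (fun x => if x = one then 1 else 0) (d * k + j - 1) y)
      Filter.atTop (nhds (condClass c νstar ((j - 1 : ℕ) : ZMod d) y)))
    (hdomstar : ∀ ν : S → ℝ, IsProbability ν → (∀ y, condT Q ν 1 y = ν y) →
      ∀ j : ℕ, 1 ≤ j → j ≤ d →
        StochDom (condClass c νstar ((j - 1 : ℕ) : ZMod d))
          (condClass c ν ((j - 1 : ℕ) : ZMod d))) :
    stayProb Q νstar =
      sInf {a : ℝ | ∃ ν : S → ℝ, IsProbability ν ∧ (∀ y, condT Q ν 1 y = ν y) ∧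
        a = stayProb Q ν} :=
  periodic_minimal_qsd_general Q d hd c hQnn hQrow hQx0 hcQ hmono νstar hνstar hqsdstar hdomstar
end
end
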